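/- For λ ∈ (0,1) and 0 < Re(s) < (1−λ)/λ, the identity Γ_λ(s+1) = (s/(1−λ)^{s+1}) · Γ_{λ/(1−λ)}(s) holds. -/

import Mathlib

/-!
Substituting `t ↦ (1 - λ) t` gives
`Γ_{λ/(1-λ)}(s) = (1 - λ)^s ∫₀^∞ (1 + λt)^(1 - 1/λ) t^(s-1) dt`.
Since `d/dt (1 + λt)^(1 - 1/λ) = (λ - 1)(1 + λt)^(-1/λ)`, integrating by parts against `t^s`
turns this integral into `(1 - λ)/s · Γ_λ(s + 1)`; the range of `Re s` is exactly what makes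
both integrals converge and the boundary terms vanish.
-/

open MeasureTheory Complex

/-- The degenerate gamma function, defined as an integral. -/
noncomputable def degGamma (l : ℝ) (s : ℂ) : ℂ :=
  ∫ t in Set.Ioi (0 : ℝ), ((1 + l * t : ℝ) : ℂ) ^ (-(1 / l) : ℂ) * (t : ℂ) ^ (s - 1)

open Set Filter Topology Asymptotics

section OneAddMulCpow

variable {l : ℝ}

lemma hasDerivAt_one_add_mul_cpow (c : ℂ) {t : ℝ} (ht : 0 < 1 + l * t) :
    HasDerivAt (fun t : ℝ => ((1 + l * t : ℝ) : ℂ) ^ c)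
      (c * ((1 + l * t : ℝ) : ℂ) ^ (c - 1) * l) t := by
  have hlin : HasDerivAt (fun t : ℝ => 1 + l * t) l t := by
    simpa using ((hasDerivAt_id t).const_mul l).const_add 1
  exact (hasStrictDerivAt_cpow_const (ofReal_mem_slitPlane.2 ht)).hasDerivAt.comp t
    hlin.ofReal_comp

lemma continuousOn_one_add_mul_cpow (hl : 0 ≤ l) (c : ℂ) :
    ContinuousOn (fun t : ℝ => ((1 + l * t : ℝ) : ℂ) ^ c) (Ici 0) := fun t ht =>
  (hasDerivAt_one_add_mul_cpow c (by nlinarith [mem_Ici.1 ht])).continuousAt.continuousWithinAt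

lemma one_add_mul_cpow_isBigO_atTop (hl : 0 < l) {c : ℂ} (hc : c.re ≤ 0) :
    (fun t : ℝ => ((1 + l * t : ℝ) : ℂ) ^ c) =O[atTop] (· ^ c.re) := by
  refine IsBigO.of_bound (l ^ c.re) ?_
  filter_upwards [eventually_gt_atTop 0] with t ht
  have hlt : 0 < l * t := mul_pos hl ht
  rw [norm_cpow_eq_rpow_re_of_pos (by linarith), Real.norm_of_nonneg (by positivity),
    ← Real.mul_rpow hl.le ht.le]
  exact Real.rpow_le_rpow_of_nonpos hlt (by linarith) hc

lemma mellinConvergent_one_add_mul_cpow (hl : 0 < l) {c s : ℂ} (hs : 0 < s.re)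
    (hcs : s.re + c.re < 0) :
    MellinConvergent (fun t : ℝ => ((1 + l * t : ℝ) : ℂ) ^ c) s := by
  have hbot : Tendsto (fun t : ℝ => ((1 + l * t : ℝ) : ℂ) ^ c) (𝓝[>] 0) (𝓝 1) := by
    simpa using ((continuousOn_one_add_mul_cpow hl.le c).continuousWithinAt
      self_mem_Ici).mono_left (nhdsWithin_mono 0 Ioi_subset_Ici_self)
  refine mellinConvergent_of_isBigO_rpow (a := -c.re) (b := 0)
    ((continuousOn_one_add_mul_cpow hl.le c).mono Ioi_subset_Ici_self |>.locallyIntegrableOn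
      measurableSet_Ioi) ?_ (by linarith) ?_ hs
  · simpa using one_add_mul_cpow_isBigO_atTop hl (c := c) (by linarith)
  · simpa using hbot.isBigO_one ℝ

/-- Integration by parts against `t ^ s`: the boundary term `(1 + l t) ^ c * t ^ s` vanishes at
both ends because `0 < re s` and `re s + re c < 0`. -/
theorem mellin_one_add_mul_cpow_sub_one (hl : 0 < l) {c s : ℂ} (hs : 0 < s.re)
    (hcs : s.re + c.re < 0) :
    l * c * mellin (fun t : ℝ => ((1 + l * t : ℝ) : ℂ) ^ (c - 1)) (s + 1) =
      -s * mellin (fun t : ℝ => ((1 + l * t : ℝ) : ℂ) ^ c) s := by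
  set u : ℝ → ℂ := fun t => ((1 + l * t : ℝ) : ℂ) ^ c
  set v : ℝ → ℂ := fun t => (t : ℂ) ^ s
  have hu : ∀ t ∈ Ioi (0 : ℝ), HasDerivAt u (c * ((1 + l * t : ℝ) : ℂ) ^ (c - 1) * l) t :=
    fun t ht => hasDerivAt_one_add_mul_cpow c (by nlinarith [mem_Ioi.1 ht])
  have hv : ∀ t ∈ Ioi (0 : ℝ), HasDerivAt v (s * (t : ℂ) ^ (s - 1)) t := fun t ht =>
    hasDerivAt_ofReal_cpow_const (mem_Ioi.1 ht).ne' (fun h => by simp [h] at hs)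
  have huv' : IntegrableOn (fun t => u t * (s * (t : ℂ) ^ (s - 1))) (Ioi 0) := by
    refine ((mellinConvergent_one_add_mul_cpow hl hs hcs).const_smul s).congr_fun
      (fun t _ => ?_) measurableSet_Ioi
    simp only [smul_eq_mul, u]; ring
  have hu'v :
      IntegrableOn (fun t => c * ((1 + l * t : ℝ) : ℂ) ^ (c - 1) * l * v t) (Ioi 0) := by
    refine ((mellinConvergent_one_add_mul_cpow hl (s := s + 1) (c := c - 1) (by simp; linarith)
      (by simp; linarith)).const_smul (c * l)).congr_fun (fun t _ => ?_) measurableSet_Ioi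
    simp only [smul_eq_mul, v, add_sub_cancel_right]; ring
  have h_zero : Tendsto (u * v) (𝓝[>] 0) (𝓝 0) := by
    have := ((continuousOn_one_add_mul_cpow hl.le c).continuousWithinAt self_mem_Ici).mul
      (continuous_ofReal_cpow_const hs).continuousWithinAt
    simpa [u, v, zero_cpow (fun h : s = 0 => by simp [h] at hs)] using
      this.mono_left (nhdsWithin_mono 0 Ioi_subset_Ici_self)
  have h_infty : Tendsto (u * v) atTop (𝓝 0) := by
    have hv_isBigO : v =O[atTop] (· ^ s.re) := by
      refine IsBigO.of_norm_eventuallyLE ?_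
      filter_upwards [eventually_gt_atTop 0] with t ht
      simp [v, norm_cpow_eq_rpow_re_of_pos ht]
    refine ((one_add_mul_cpow_isBigO_atTop hl (c := c) (by linarith)).mul
      hv_isBigO).trans_tendsto ?_
    refine (tendsto_rpow_neg_atTop (y := -(c.re + s.re)) (by linarith)).congr' ?_
    filter_upwards [eventually_gt_atTop 0] with t ht
    rw [neg_neg, Real.rpow_add ht]
  have ibp := integral_Ioi_mul_deriv_eq_deriv_mul hu hv huv' hu'v h_zero h_infty
  rw [sub_self, zero_sub] at ibp
  calc (l * c : ℂ) * mellin (fun t : ℝ => ((1 + l * t : ℝ) : ℂ) ^ (c - 1)) (s + 1)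
      = ∫ t in Ioi 0, c * ((1 + l * t : ℝ) : ℂ) ^ (c - 1) * l * v t := by
        rw [mellin, ← integral_const_mul]
        congr 1 with t
        simp only [smul_eq_mul, add_sub_cancel_right, v]; ring
    _ = -s * mellin u s := by
        rw [← neg_neg (∫ t in Ioi 0, _), ← ibp, mellin, ← integral_const_mul,
          ← integral_neg]
        congr 1 with t
        simp only [smul_eq_mul]; ring

end OneAddMulCpow

lemma degGamma_eq_mellin (l : ℝ) (s : ℂ) :
    degGamma l s = mellin (fun t : ℝ => ((1 + l * t : ℝ) : ℂ) ^ (-(1 / l) : ℂ)) s := by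
  simp only [degGamma, mellin, smul_eq_mul, mul_comm]

lemma degGamma_div (l : ℝ) {a : ℝ} (ha : 0 < a) (s : ℂ) :
    degGamma (l / a) s =
      (a : ℂ) ^ s * mellin (fun t : ℝ => ((1 + l * t : ℝ) : ℂ) ^ (-(a / l) : ℂ)) s := by
  have hscale := mellin_comp_mul_left
    (fun t : ℝ => ((1 + l / a * t : ℝ) : ℂ) ^ (-(1 / (l / a : ℝ)) : ℂ)) s ha
  have hcomp : (fun t : ℝ => ((1 + l / a * (a * t) : ℝ) : ℂ) ^ (-(1 / (l / a : ℝ)) : ℂ)) =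
      fun t : ℝ => ((1 + l * t : ℝ) : ℂ) ^ (-(a / l) : ℂ) := by
    ext t
    rw [show l / a * (a * t) = l * t by field_simp, ofReal_div, one_div_div]
  rw [hcomp, smul_eq_mul] at hscale
  rw [degGamma_eq_mellin, hscale, ← mul_assoc, cpow_neg, mul_inv_cancel₀, one_mul]
  exact cpow_ne_zero_iff.2 (Or.inl (ofReal_ne_zero.2 ha.ne'))

theorem degGamma_shift (l : ℝ) (hl : l ∈ Set.Ioo (0 : ℝ) 1)
    (s : ℂ) (hs : 0 < s.re) (hs' : s.re < (1 - l) / l) :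
    degGamma l (s + 1) = s / ((1 - l : ℂ)) ^ (s + 1) * degGamma (l / (1 - l)) s := by
  obtain ⟨hl0, hl1⟩ := hl
  have hl0' : (l : ℂ) ≠ 0 := ofReal_ne_zero.2 hl0.ne'
  have h1l : (1 - l : ℂ) ≠ 0 := by exact_mod_cast (sub_pos.2 hl1).ne'
  have h1ls : (1 - l : ℂ) ^ s ≠ 0 := cpow_ne_zero_iff.2 (Or.inl h1l)
  have hc_sub_one : -((1 - l : ℝ) / l : ℂ) - 1 = -(1 / l) := by field_simp; push_cast; ring
  have hlc : (l : ℂ) * -((1 - l : ℝ) / l : ℂ) = -(1 - l) := by push_cast; field_simp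
  have ibp := mellin_one_add_mul_cpow_sub_one hl0 (c := -((1 - l : ℝ) / l : ℂ)) hs
    (by simpa [← ofReal_div] using hs')
  rw [hc_sub_one, hlc, ← degGamma_eq_mellin] at ibp
  rw [degGamma_div l (sub_pos.2 hl1), cpow_add _ _ h1l, cpow_one]
  push_cast at ibp ⊢
  field_simp
  linear_combination -ibp
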